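/- arXiv:2304.04074 — 2 statements merged into one kernel-verified Lean document; each statement's English description precedes it below -/
import Mathlib

section
/- Let f₁,…,f_L : [0,1]² → ℝ be continuous, linearly independent (no nonzero linear combination vanishes a.e.), each satisfying ∫₀¹ f_r(x,y) dy = 0 and ∫₀¹ f_r(x,y) dx = 0. Define g_r((x₁,y₁),(x₂,y₂)) = f_r(x₁,y₁) + f_r(x₂,y₂) − f_r(x₁,y₂) − f_r(x₂,y₁). If b ∈ ℝ^L satisfies Σ_r b_r g_r(z₁,z₂) = 0 for Lebesgue-a.e. (z₁,z₂) ∈ ([0,1]²)², then b = 0. -/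
open MeasureTheory

/-- Lebesgue measure on the unit square `[0,1]²`. -/
noncomputable def sqMeas : Measure (ℝ × ℝ) :=
  (volume.restrict (Set.Icc (0 : ℝ) 1)).prod (volume.restrict (Set.Icc (0 : ℝ) 1))

namespace StmtAux

noncomputable def μ₀ : Measure ℝ := volume.restrict (Set.Icc (0:ℝ) 1)

instance : IsProbabilityMeasure (volume.restrict (Set.Icc (0:ℝ) 1)) :=
  ⟨by simp [Real.volume_Icc]⟩

instance : IsProbabilityMeasure μ₀ := by rw [μ₀]; infer_instance

lemma sq_eq : sqMeas = volume.restrict (Set.Icc (0:ℝ) 1 ×ˢ Set.Icc (0:ℝ) 1) := by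
  rw [sqMeas, Measure.prod_restrict, ← Measure.volume_eq_prod]

instance : IsProbabilityMeasure sqMeas := by
  rw [sqMeas]; exact Measure.prod.instIsProbabilityMeasure _ _

lemma integral_Icc_eq (h : ℝ → ℝ) : ∫ y, h y ∂μ₀ = ∫ y in (0:ℝ)..1, h y := by
  rw [μ₀, intervalIntegral.integral_of_le zero_le_one, ← integral_Icc_eq_integral_Ioc]

end StmtAux

theorem stmt_2 {L : ℕ} (f : Fin L → ℝ → ℝ → ℝ)
    (hcont : ∀ r, ContinuousOn (fun p : ℝ × ℝ => f r p.1 p.2) (Set.Icc 0 1 ×ˢ Set.Icc 0 1))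
    (hindep : ∀ c : Fin L → ℝ,
      (∀ᵐ p ∂sqMeas, ∑ r, c r * f r p.1 p.2 = 0) → c = 0)
    (hrow : ∀ r, ∀ x ∈ Set.Icc (0 : ℝ) 1, ∫ y in (0 : ℝ)..1, f r x y = 0)
    (hcol : ∀ r, ∀ y ∈ Set.Icc (0 : ℝ) 1, ∫ x in (0 : ℝ)..1, f r x y = 0)
    (g : Fin L → (ℝ × ℝ) → (ℝ × ℝ) → ℝ)
    (hg : ∀ r z₁ z₂, g r z₁ z₂ =
      f r z₁.1 z₁.2 + f r z₂.1 z₂.2 - f r z₁.1 z₂.2 - f r z₂.1 z₁.2)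
    (b : Fin L → ℝ)
    (hb : ∀ᵐ q ∂(sqMeas.prod sqMeas), ∑ r, b r * g r q.1 q.2 = 0) :
    b = 0 := by
  classical
  set I : Set ℝ := Set.Icc (0:ℝ) 1 with hI
  have hIcompact : IsCompact (I ×ˢ I) := isCompact_Icc.prod isCompact_Icc
  have hImeas : MeasurableSet (I ×ˢ I) := (measurableSet_Icc).prod measurableSet_Icc
  have hsq : sqMeas = StmtAux.μ₀.prod StmtAux.μ₀ := rfl
  -- integrability of each f r on the square
  have hint : ∀ r, Integrable (fun p : ℝ × ℝ => f r p.1 p.2) sqMeas := by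
    intro r
    rw [StmtAux.sq_eq]
    exact (hcont r).integrableOn_compact hIcompact
  -- row integrals vanish (w.r.t. μ₀)
  have hrow' : ∀ r, ∀ x ∈ I, ∫ y, f r x y ∂StmtAux.μ₀ = 0 := by
    intro r x hx
    rw [StmtAux.integral_Icc_eq]
    exact hrow r x hx
  have hcol' : ∀ r, ∀ y ∈ I, ∫ x, f r x y ∂StmtAux.μ₀ = 0 := by
    intro r y hy
    rw [StmtAux.integral_Icc_eq]
    exact hcol r y hy
  -- full double integral vanishes
  have hmemμ₀ : ∀ᵐ x ∂StmtAux.μ₀, x ∈ I := ae_restrict_mem measurableSet_Icc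
  have hfull : ∀ r, ∫ z, f r z.1 z.2 ∂sqMeas = 0 := by
    intro r
    have h := hint r
    rw [hsq] at h ⊢
    rw [MeasureTheory.integral_prod _ h]
    have : ∀ᵐ x ∂StmtAux.μ₀, ∫ y, f r x y ∂StmtAux.μ₀ = 0 := by
      filter_upwards [hmemμ₀] with x hx using hrow' r x hx
    rw [integral_congr_ae this, integral_zero]
  apply hindep b
  have hae : ∀ᵐ z₁ ∂sqMeas, ∀ᵐ z₂ ∂sqMeas, ∑ r, b r * g r z₁ z₂ = 0 :=
    Measure.ae_ae_of_ae_prod hb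
  have hmem : ∀ᵐ z₁ ∂sqMeas, z₁ ∈ I ×ˢ I := by
    rw [StmtAux.sq_eq]; exact ae_restrict_mem hImeas
  filter_upwards [hae, hmem] with z₁ hz₁ hz₁mem
  obtain ⟨hx₁, hy₁⟩ := hz₁mem
  -- integrability of auxiliary slices
  have intC : ∀ r, Integrable (fun z : ℝ × ℝ => f r z₁.1 z.2) sqMeas := by
    intro r
    rw [StmtAux.sq_eq]
    refine ContinuousOn.integrableOn_compact hIcompact ?_
    have hc : Continuous (fun z : ℝ × ℝ => (z₁.1, z.2)) := by fun_prop
    exact (hcont r).comp hc.continuousOn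
      (fun z hz => ⟨hx₁, (Set.mem_prod.mp hz).2⟩)
  have intD : ∀ r, Integrable (fun z : ℝ × ℝ => f r z.1 z₁.2) sqMeas := by
    intro r
    rw [StmtAux.sq_eq]
    refine ContinuousOn.integrableOn_compact hIcompact ?_
    have hc : Continuous (fun z : ℝ × ℝ => (z.1, z₁.2)) := by fun_prop
    exact (hcont r).comp hc.continuousOn
      (fun z hz => ⟨(Set.mem_prod.mp hz).1, hy₁⟩)
  have hgfun : ∀ r, (fun z₂ => g r z₁ z₂)
      = fun z₂ : ℝ × ℝ => f r z₁.1 z₁.2 + f r z₂.1 z₂.2 - f r z₁.1 z₂.2 - f r z₂.1 z₁.2 :=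
    fun r => funext (hg r z₁)
  have hgint : ∀ r, Integrable (fun z₂ => g r z₁ z₂) sqMeas := by
    intro r
    rw [hgfun r]
    exact (((integrable_const _).add (hint r)).sub (intC r)).sub (intD r)
  -- integral of g r z₁ · equals f r z₁.1 z₁.2
  have hCzero : ∀ r, ∫ z, f r z₁.1 z.2 ∂sqMeas = 0 := by
    intro r
    have h := intC r
    rw [hsq] at h ⊢
    rw [MeasureTheory.integral_prod _ h]
    have : ∀ᵐ x ∂StmtAux.μ₀, ∫ y, f r z₁.1 y ∂StmtAux.μ₀ = 0 := by
      filter_upwards with x using hrow' r z₁.1 hx₁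
    rw [integral_congr_ae this, integral_zero]
  have hDzero : ∀ r, ∫ z, f r z.1 z₁.2 ∂sqMeas = 0 := by
    intro r
    have h := intD r
    rw [hsq] at h ⊢
    rw [MeasureTheory.integral_prod _ h]
    have h1 : ∀ᵐ x ∂StmtAux.μ₀, (∫ _, f r x z₁.2 ∂StmtAux.μ₀) = f r x z₁.2 := by
      filter_upwards with x
      simp
    rw [integral_congr_ae h1]
    exact hcol' r z₁.2 hy₁
  have hgI : ∀ r, ∫ z₂, g r z₁ z₂ ∂sqMeas = f r z₁.1 z₁.2 := by
    intro r
    have i1 : Integrable (fun z₂ : ℝ × ℝ => f r z₁.1 z₁.2 + f r z₂.1 z₂.2) sqMeas :=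
      (integrable_const _).add (hint r)
    have i2 : Integrable
        (fun z₂ : ℝ × ℝ => f r z₁.1 z₁.2 + f r z₂.1 z₂.2 - f r z₁.1 z₂.2) sqMeas :=
      i1.sub (intC r)
    rw [hgfun r]
    rw [integral_sub i2 (intD r), integral_sub i1 (intC r),
        integral_add (integrable_const _) (hint r),
        hfull r, hCzero r, hDzero r]
    simp
  -- conclude
  have key : ∫ z₂, (∑ r, b r * g r z₁ z₂) ∂sqMeas = 0 := by
    have : ∀ᵐ z₂ ∂sqMeas, (∑ r, b r * g r z₁ z₂) = (0:ℝ) := hz₁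
    rw [integral_congr_ae this, integral_zero]
  rw [integral_finset_sum _ (fun r _ => (hgint r).const_mul (b r))] at key
  simp only [integral_const_mul, hgI] at key
  exact key
end

section
/- Let H be a finite loopless multigraph with k edges, exactly 3k/2 vertices (so k is even), no isolated vertices, and no isolated edge. Then H is a disjoint union of k/2 'stars': every connected component has exactly 3 vertices and exactly 2 edges. -/
/-!
In a component with `n` vertices and `m` edges, connectedness gives `n ≤ m + 1`, and the absence
of isolated vertices and isolated edges gives `m ≥ 2`; together `2n ≤ 3m`. Summing over all
components yields `2|V| ≤ 3k`, which is an equality by hypothesis, so `2n = 3m` in every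
component, and with `n ≤ m + 1` this forces `m = 2`, `n = 3`.
-/

open Finset SimpleGraph

lemma Nat.card_eq_sum_card_fiber {α β : Type*} [Finite α] [Fintype β] (f : α → β) :
    Nat.card α = ∑ b, Nat.card {a // f a = b} := by
  rw [← Nat.card_sigma, Nat.card_congr (Equiv.sigmaFiberEquiv f)]

lemma eq_three_and_eq_two_of_two_mul_sum_eq {β : Type*} [Fintype β] {n m : β → ℕ}
    (hn : ∀ b, n b ≤ m b + 1) (hm : ∀ b, 2 ≤ m b) (h : 2 * ∑ b, n b = 3 * ∑ b, m b) (b : β) :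
    n b = 3 ∧ m b = 2 := by
  have hle (b) : 2 * n b ≤ 3 * m b := by linarith [hn b, hm b]
  have hb : 2 * n b = 3 * m b :=
    (sum_eq_sum_iff_of_le fun b _ => hle b).1 (by rwa [← mul_sum, ← mul_sum]) b (mem_univ b)
  have := hn b
  have := hm b
  omega

namespace Multigraph

variable {V ι : Type*} (e : ι → V × V)

abbrev toSimpleGraph : SimpleGraph V :=
  SimpleGraph.fromRel fun v w => ∃ a, (e a).1 = v ∧ (e a).2 = w

variable {e}

lemma connectedComponentMk_fst_eq_snd (a : ι) :
    (toSimpleGraph e).connectedComponentMk (e a).1 =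
      (toSimpleGraph e).connectedComponentMk (e a).2 := by
  by_cases h : (e a).1 = (e a).2
  · rw [h]
  · exact ConnectedComponent.connectedComponentMk_eq_of_adj ⟨h, Or.inl ⟨a, rfl, rfl⟩⟩

lemma exists_eq_of_mem_edgeSet {z : Sym2 V} (hz : z ∈ (toSimpleGraph e).edgeSet) :
    ∃ a, s((e a).1, (e a).2) = z := by
  induction z using Sym2.ind with
  | _ v w =>
    obtain ⟨-, ⟨a, rfl, rfl⟩ | ⟨a, rfl, rfl⟩⟩ := hz
    · exact ⟨a, rfl⟩
    · exact ⟨a, Sym2.eq_swap⟩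

lemma connectedComponentMk_eq_of_mem {v : V} {a : ι} (h : v = (e a).1 ∨ v = (e a).2) :
    (toSimpleGraph e).connectedComponentMk v =
      (toSimpleGraph e).connectedComponentMk (e a).1 := by
  rcases h with rfl | rfl
  · rfl
  · exact (connectedComponentMk_fst_eq_snd a).symm

lemma card_supp_le_card_edges_add_one [Finite ι] (c : (toSimpleGraph e).ConnectedComponent) :
    Nat.card {v // (toSimpleGraph e).connectedComponentMk v = c} ≤
      Nat.card {a // (toSimpleGraph e).connectedComponentMk (e a).1 = c} + 1 := by
  -- Every edge of the component comes from a multigraph edge; choosing one is injective.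
  refine c.connected_toSimpleGraph.card_vert_le_card_edgeSet_add_one.trans ?_
  have lift : ∀ z : c.toSimpleGraph.edgeSet,
      ∃ a : {a // (toSimpleGraph e).connectedComponentMk (e a).1 = c},
        s((e a).1, (e a).2) = z.1.map Subtype.val := by
    intro z
    obtain ⟨a, ha⟩ := exists_eq_of_mem_edgeSet (c.toSimpleGraph_hom.map_mem_edgeSet z.2)
    obtain ⟨v, -, hv⟩ := Sym2.mem_map.1 (ha ▸ Sym2.mem_mk_left (e a).1 (e a).2)
    exact ⟨⟨a, hv ▸ v.2⟩, ha⟩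
  choose f hf using lift
  refine Nat.add_le_add_right (Nat.card_le_card_of_injective f fun z z' h => ?_) 1
  exact Subtype.ext (Sym2.map.injective Subtype.val_injective (by rw [← hf, ← hf, h]))

lemma two_le_card_edges [Finite ι] (hvert : ∀ v, ∃ a, v = (e a).1 ∨ v = (e a).2)
    (hedge : ∀ a, ∃ b, b ≠ a ∧ ({(e a).1, (e a).2} ∩ {(e b).1, (e b).2} : Set V).Nonempty)
    (c : (toSimpleGraph e).ConnectedComponent) :
    2 ≤ Nat.card {a // (toSimpleGraph e).connectedComponentMk (e a).1 = c} := by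
  obtain ⟨v, rfl⟩ := c.exists_rep
  obtain ⟨a, hva⟩ := hvert v
  obtain ⟨b, hba, x, hxa, hxb⟩ := hedge a
  have hb : (toSimpleGraph e).connectedComponentMk (e b).1 =
      (toSimpleGraph e).connectedComponentMk v :=
    (connectedComponentMk_eq_of_mem hxb).symm.trans
      ((connectedComponentMk_eq_of_mem hxa).trans (connectedComponentMk_eq_of_mem hva).symm)
  have : Nontrivial {a // (toSimpleGraph e).connectedComponentMk (e a).1 =
      (toSimpleGraph e).connectedComponentMk v} :=
    ⟨⟨a, (connectedComponentMk_eq_of_mem hva).symm⟩, ⟨b, hb⟩,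
      fun h => hba (congrArg Subtype.val h).symm⟩
  exact Finite.one_lt_card_iff_nontrivial.2 this

end Multigraph

theorem stmt_6_general {V : Type*} [Fintype V] {k : ℕ} (e : Fin k → V × V)
    (hnoisovert : ∀ v : V, ∃ a, v = (e a).1 ∨ v = (e a).2)
    (hcard : 2 * Fintype.card V = 3 * k)
    (hnoisoedge : ¬ ∃ a, ∀ b, b ≠ a →
      ({(e a).1, (e a).2} ∩ {(e b).1, (e b).2} : Set V) = ∅)
    (G : SimpleGraph V)
    (hG : G = SimpleGraph.fromRel (fun v w => ∃ a, (e a).1 = v ∧ (e a).2 = w)) :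
    ∀ c : G.ConnectedComponent,
      Nat.card {v : V // G.connectedComponentMk v = c} = 3 ∧
      Nat.card {a : Fin k // G.connectedComponentMk (e a).1 = c} = 2 := by
  subst hG
  push Not at hnoisoedge
  have := Fintype.ofFinite (Multigraph.toSimpleGraph e).ConnectedComponent
  refine eq_three_and_eq_two_of_two_mul_sum_eq Multigraph.card_supp_le_card_edges_add_one
    (Multigraph.two_le_card_edges hnoisovert hnoisoedge) ?_
  rw [← Nat.card_eq_sum_card_fiber, ← Nat.card_eq_sum_card_fiber, Nat.card_eq_fintype_card, hcard,
    Nat.card_fin]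

/-- A finite loopless multigraph with `k` edges, exactly `3k/2` vertices, no isolated
vertices and no isolated edge, is a disjoint union of two-edge stars: every connected
component (of the underlying adjacency graph) has exactly 3 vertices and exactly 2 edges. -/
theorem stmt_6 {V : Type*} [Fintype V] {k : ℕ} (e : Fin k → V × V)
    (hloopless : ∀ a, (e a).1 ≠ (e a).2)
    (hnoisovert : ∀ v : V, ∃ a, v = (e a).1 ∨ v = (e a).2)
    (hcard : 2 * Fintype.card V = 3 * k)
    (hnoisoedge : ¬ ∃ a, ∀ b, b ≠ a →
      ({(e a).1, (e a).2} ∩ {(e b).1, (e b).2} : Set V) = ∅)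
    (G : SimpleGraph V)
    (hG : G = SimpleGraph.fromRel (fun v w => ∃ a, (e a).1 = v ∧ (e a).2 = w)) :
    ∀ c : G.ConnectedComponent,
      Nat.card {v : V // G.connectedComponentMk v = c} = 3 ∧
      Nat.card {a : Fin k // G.connectedComponentMk (e a).1 = c} = 2 :=
  stmt_6_general e hnoisovert hcard hnoisoedge G hG
end
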